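/- (Forward-kernel representation, from the proof of Lemma A.3.) Assume (A1). Let 0 ≤ k < i ≤ n and let f be a bounded measurable function on X^{n+1} which depends only on the coordinates (x_i, …, x_n). Then L_i⋯L_{n−1} f(x_{0:i}) depends on x_{0:i} only through x_i, so that h(x_i) := L_i⋯L_{n−1} f(x_i) / L_i⋯L_{n−1}(x_i, X^{n+1}) is well defined, and for every x_{0:k} ∈ X^{k+1}, L_k⋯L_{n−1} f(x_{0:k}) / L_k⋯L_{n−1}(x_k, X^{n+1}) = ∫_X h(x_i) F_{k|n} F_{k+1|n} ⋯ F_{i−1|n}(x_k, dx_i), where F_{k|n} F_{k+1|n} ⋯ F_{i−1|n} denotes the composition of the forward smoothing kernels. -/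

import Mathlib

/-!
Write `h_j = L_j⋯L_{n-1} f / L_j⋯L_{n-1} 1`. The density of `F_{j|n}(z, ·)` is
`g(·, y_{j+1}) q(z, ·) L_{j+1}⋯L_{n-1} 1 / L_j⋯L_{n-1} 1(z)`, and for `j < i` one application
of `L_j` to `L_{j+1}⋯L_{n-1} f` only sees the coordinate `x_j`, so `F_{j|n} h_{j+1} = h_j`:
the `h_j` are space-time harmonic for the inhomogeneous chain `F_{k|n}, …, F_{i-1|n}`.
Integrating `h_i` along the chain started at `x_k` therefore returns `h_k(x_k)`. Under (A1)
every `L_j⋯L_{n-1} 1` is bounded away from zero, which makes the `F_{j|n}` Markov kernels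
and the `h_j` bounded.
-/

open MeasureTheory

noncomputable section

variable {X : Type*} [MeasurableSpace X] {Y : Type*}

/-- `LF μ q g ys n m f x` is the iterated unnormalized smoothing operator
`(L_{n-m} ⋯ L_{n-1} f)(x_{0:n-m})`, paths being represented as elements of `ℕ → X`. -/
def LF (μ : Measure X) (q : X → X → ℝ) (g : X → Y → ℝ) (ys : ℕ → Y) (n : ℕ) :
    ℕ → ((ℕ → X) → ℝ) → (ℕ → X) → ℝ
  | 0, f, x => f x
  | m + 1, f, x =>
      ∫ x', g x' (ys (n - m)) * q (x (n - m - 1)) x' *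
        LF μ q g ys n m f (Function.update x (n - m) x') ∂μ

/-- The total mass `L_k ⋯ L_{n-1}(x_k, X^{n+1})`, which depends on `x_{0:k}`
only through `x_k`. -/
def Lmass (μ : Measure X) (q : X → X → ℝ) (g : X → Y → ℝ) (ys : ℕ → Y) (n k : ℕ) (xk : X) : ℝ :=
  LF μ q g ys n (n - k) (fun _ => 1) (fun _ => xk)

/-- The forward smoothing kernel `F_{k|n}(x, ·)`. -/
def Fker (μ : Measure X) (q : X → X → ℝ) (g : X → Y → ℝ) (ys : ℕ → Y) (n k : ℕ) (x : X) :
    Measure X :=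
  if k < n then
    μ.withDensity fun x' => ENNReal.ofReal
      (g x' (ys (k + 1)) * Lmass μ q g ys n (k + 1) x' * q x x' / Lmass μ q g ys n k x)
  else μ.withDensity fun x' => ENNReal.ofReal (q x x')

/-- `kcompFrom K m ν j = ν K_m K_{m+1} ⋯ K_{m+j}`. -/
def kcompFrom (K : ℕ → X → Measure X) (m : ℕ) (ν : Measure X) : ℕ → Measure X
  | 0 => ν.bind (K m)
  | j + 1 => (kcompFrom K m ν j).bind (K (m + j + 1))


open ProbabilityTheory Set

/-- Assumption (A1), with the mixing constants `σ₋, σ₊` quantified existentially. -/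
structure AssumptionA1 (μ : Measure X) (q : X → X → ℝ) (g : X → Y → ℝ) : Prop where
  measurable_q : Measurable (Function.uncurry q)
  q_lower : ∃ σ, 0 < σ ∧ ∀ a b, σ ≤ q a b
  q_upper : ∃ σ, ∀ a b, q a b ≤ σ
  measurable_g : ∀ y, Measurable fun x => g x y
  g_nonneg : ∀ x y, 0 ≤ g x y
  g_upper : ∀ y, ∃ C, ∀ x, g x y ≤ C
  integral_g_pos : ∀ y, 0 < ∫ x, g x y ∂μ

namespace AssumptionA1

variable {μ : Measure X} {q : X → X → ℝ} {g : X → Y → ℝ}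

lemma q_nonneg (hA : AssumptionA1 μ q g) (a b : X) : 0 ≤ q a b := by
  obtain ⟨σ, hσ, hq⟩ := hA.q_lower
  exact hσ.le.trans (hq a b)

lemma abs_q_le (hA : AssumptionA1 μ q g) : ∃ C, ∀ a b, |q a b| ≤ C := by
  obtain ⟨σ, hq⟩ := hA.q_upper
  exact ⟨σ, fun a b => (abs_of_nonneg (hA.q_nonneg a b)).trans_le (hq a b)⟩

lemma abs_g_le (hA : AssumptionA1 μ q g) (y : Y) : ∃ C, ∀ x, |g x y| ≤ C := by
  obtain ⟨C, hg⟩ := hA.g_upper y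
  exact ⟨C, fun x => (abs_of_nonneg (hA.g_nonneg x y)).trans_le (hg x)⟩

lemma measurable_q_left (hA : AssumptionA1 μ q g) (z : X) : Measurable (q z) :=
  hA.measurable_q.of_uncurry_left

end AssumptionA1

lemma abs_mul_mul_le {a b c A B C : ℝ} (ha : |a| ≤ A) (hb : |b| ≤ B) (hc : |c| ≤ C) :
    |a * b * c| ≤ A * B * C := by
  have hA : 0 ≤ A := (abs_nonneg a).trans ha
  have hB : 0 ≤ B := (abs_nonneg b).trans hb
  rw [abs_mul, abs_mul]
  gcongr

lemma integral_bind_of_abs_le {α β : Type*} [MeasurableSpace α] [MeasurableSpace β]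
    {ν : Measure α} [IsFiniteMeasure ν] {K : α → Measure β} (hK : Measurable K)
    (hK1 : ∀ x, IsProbabilityMeasure (K x)) {h : β → ℝ} (hh : Measurable h) {C : ℝ}
    (hC : ∀ z, |h z| ≤ C) :
    ∫ z, h z ∂ν.bind K = ∫ x, ∫ z, h z ∂K x ∂ν := by
  let κ : Kernel α β := ⟨K, hK⟩
  have : IsMarkovKernel κ := ⟨hK1⟩
  exact Kernel.integral_comp (κ := Kernel.const Unit ν) (η := κ) (a := ())
    (Integrable.of_bound hh.aestronglyMeasurable C (ae_of_all _ hC))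

section KernelChain

variable {K : ℕ → X → Measure X} {k i : ℕ}

lemma isProbabilityMeasure_kcompFrom (hK : ∀ m, k ≤ m → m < i → Measurable (K m))
    (hK1 : ∀ m, k ≤ m → m < i → ∀ x, IsProbabilityMeasure (K m x))
    (ν : Measure X) [IsProbabilityMeasure ν] (j : ℕ) (hj : k + j < i) :
    IsProbabilityMeasure (kcompFrom K k ν j) := by
  induction j with
  | zero =>
    exact isProbabilityMeasure_bind (hK k le_rfl (by omega)).aemeasurable
      (ae_of_all _ (hK1 k le_rfl (by omega)))
  | succ j ih =>
    have := ih (by omega)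
    exact isProbabilityMeasure_bind (hK _ (by omega) (by omega)).aemeasurable
      (ae_of_all _ (hK1 _ (by omega) (by omega)))

lemma integral_kcompFrom_of_harmonic (hK : ∀ m, k ≤ m → m < i → Measurable (K m))
    (hK1 : ∀ m, k ≤ m → m < i → ∀ x, IsProbabilityMeasure (K m x))
    (ν : Measure X) [IsProbabilityMeasure ν] {H : ℕ → X → ℝ} (hHm : ∀ m, Measurable (H m))
    (hHb : ∀ m, ∃ C, ∀ x, |H m x| ≤ C)
    (hH : ∀ m, k ≤ m → m < i → ∀ x, ∫ w, H (m + 1) w ∂K m x = H m x)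
    (j : ℕ) (hj : k + j < i) :
    ∫ x, H (k + j + 1) x ∂kcompFrom K k ν j = ∫ x, H k x ∂ν := by
  induction j with
  | zero =>
    obtain ⟨C, hC⟩ := hHb (k + 1)
    rw [kcompFrom, integral_bind_of_abs_le (hK k le_rfl (by omega)) (hK1 k le_rfl (by omega))
      (hHm _) hC]
    exact integral_congr_ae (ae_of_all _ (hH k le_rfl (by omega)))
  | succ j ih =>
    have := isProbabilityMeasure_kcompFrom hK hK1 ν j (by omega)
    obtain ⟨C, hC⟩ := hHb (k + (j + 1) + 1)
    rw [kcompFrom, integral_bind_of_abs_le (hK _ (by omega) (by omega))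
      (hK1 _ (by omega) (by omega)) (hHm _) hC, ← ih (by omega)]
    exact integral_congr_ae (ae_of_all _ (hH _ (by omega) (by omega)))

end KernelChain

section Smoothing

variable {μ : Measure X} {q : X → X → ℝ} {g : X → Y → ℝ} {ys : ℕ → Y} {n : ℕ}

lemma LF_succ (m : ℕ) (f : (ℕ → X) → ℝ) (x : ℕ → X) :
    LF μ q g ys n (m + 1) f x = ∫ x', g x' (ys (n - m)) * q (x (n - m - 1)) x' *
      LF μ q g ys n m f (Function.update x (n - m) x') ∂μ := rfl

lemma dependsOn_LF {f : (ℕ → X) → ℝ} {i : ℕ} (hf : DependsOn f (Icc i n)) (m : ℕ)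
    (hm : m ≤ n) : DependsOn (LF μ q g ys n m f) (Icc (min i (n - m)) (n - m)) := by
  induction m with
  | zero => exact fun x y hxy => hf fun j ⟨hij, hjn⟩ => hxy j ⟨by omega, by omega⟩
  | succ m ih =>
    intro x y hxy
    have hprev : x (n - m - 1) = y (n - m - 1) := hxy _ ⟨by omega, by omega⟩
    simp only [LF_succ, hprev]
    congr 1 with w
    congr 1
    refine ih (by omega) fun j ⟨hj₁, hj₂⟩ => ?_
    rcases eq_or_ne j (n - m) with rfl | hne
    · simp
    · simp only [Function.update_of_ne hne]
      exact hxy j ⟨by omega, by omega⟩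

lemma dependsOn_LF_sub {f : (ℕ → X) → ℝ} {i j : ℕ} (hf : DependsOn f (Icc i n)) (hji : j ≤ i)
    (hjn : j ≤ n) : DependsOn (LF μ q g ys n (n - j) f) {j} :=
  (dependsOn_LF hf (n - j) (by omega)).mono fun l hl => by
    simp only [mem_Icc] at hl
    simp only [mem_singleton_iff]
    omega

lemma LF_sub_const_eq_integral {f : (ℕ → X) → ℝ} {i j : ℕ} (hf : DependsOn f (Icc i n))
    (hji : j < i) (hin : i ≤ n) (z : X) :
    LF μ q g ys n (n - j) f (fun _ => z) =
      ∫ w, g w (ys (j + 1)) * q z w * LF μ q g ys n (n - (j + 1)) f (fun _ => w) ∂μ := by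
  set m := n - (j + 1)
  rw [show n - j = m + 1 by omega, LF_succ, show n - m = j + 1 by omega]
  congr 1 with w
  congr 1
  exact dependsOn_LF_sub hf (j := j + 1) (by omega) (by omega) (by rintro _ rfl; simp)

lemma Lmass_eq_integral {j : ℕ} (hj : j < n) (z : X) :
    Lmass μ q g ys n j z =
      ∫ w, g w (ys (j + 1)) * q z w * Lmass μ q g ys n (j + 1) w ∂μ :=
  LF_sub_const_eq_integral ((dependsOn_const 1).mono (empty_subset (Icc n n))) hj le_rfl z

lemma measurable_LF [SFinite μ] (hq : Measurable (Function.uncurry q))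
    (hg : ∀ y, Measurable fun x => g x y) {f : (ℕ → X) → ℝ} (hf : Measurable f) (m : ℕ) :
    Measurable (LF μ q g ys n m f) := by
  induction m with
  | zero => exact hf
  | succ m ih =>
    have hq' : Measurable fun p : (ℕ → X) × X => q (p.1 (n - m - 1)) p.2 :=
      hq.comp (f := fun p : (ℕ → X) × X => (p.1 (n - m - 1), p.2))
        (((measurable_pi_apply _).comp measurable_fst).prodMk measurable_snd)
    have hint : Measurable fun p : (ℕ → X) × X => g p.2 (ys (n - m)) *
        q (p.1 (n - m - 1)) p.2 * LF μ q g ys n m f (Function.update p.1 (n - m) p.2) :=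
      (((hg _).comp measurable_snd).mul hq').mul (ih.comp measurable_update')
    exact hint.stronglyMeasurable.integral_prod_right'.measurable

lemma measurable_LF_const [SFinite μ] (hq : Measurable (Function.uncurry q))
    (hg : ∀ y, Measurable fun x => g x y) {f : (ℕ → X) → ℝ} (hf : Measurable f) (m : ℕ) :
    Measurable fun z : X => LF μ q g ys n m f (fun _ => z) :=
  (measurable_LF hq hg hf m).comp (measurable_pi_lambda _ fun _ => measurable_id)

lemma abs_LF_le [IsFiniteMeasure μ] (hq : ∃ C, ∀ a b, |q a b| ≤ C)
    (hg : ∀ y, ∃ C, ∀ x, |g x y| ≤ C) {f : (ℕ → X) → ℝ} (hf : ∃ C, ∀ x, |f x| ≤ C) (m : ℕ) :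
    ∃ C, ∀ x, |LF μ q g ys n m f x| ≤ C := by
  induction m with
  | zero => exact hf
  | succ m ih =>
    obtain ⟨Q, hQ⟩ := hq
    obtain ⟨G, hG⟩ := hg (ys (n - m))
    obtain ⟨C, hC⟩ := ih
    refine ⟨G * Q * C * μ.real univ, fun x => ?_⟩
    rw [LF_succ, ← Real.norm_eq_abs]
    exact norm_integral_le_of_norm_le_const
      (ae_of_all _ fun w => abs_mul_mul_le (hG w) (hQ _ _) (hC _))

variable [IsFiniteMeasure μ]

lemma integrable_LF_integrand (hA : AssumptionA1 μ q g) {f : (ℕ → X) → ℝ} (hfm : Measurable f)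
    (hfb : ∃ C, ∀ x, |f x| ≤ C) (m : ℕ) (x : ℕ → X) :
    Integrable (fun w => g w (ys (n - m)) * q (x (n - m - 1)) w *
      LF μ q g ys n m f (Function.update x (n - m) w)) μ := by
  obtain ⟨Q, hQ⟩ := hA.abs_q_le
  obtain ⟨G, hG⟩ := hA.abs_g_le (ys (n - m))
  obtain ⟨C, hC⟩ := abs_LF_le (μ := μ) (ys := ys) (n := n) hA.abs_q_le hA.abs_g_le hfb m
  refine Integrable.of_bound ?_ (G * Q * C) (ae_of_all _ fun w => ?_)
  · exact (((hA.measurable_g _).mul (hA.measurable_q_left _)).mul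
      ((measurable_LF hA.measurable_q hA.measurable_g hfm m).comp
        (measurable_update x))).aestronglyMeasurable
  · exact abs_mul_mul_le (hG w) (hQ _ _) (hC _)

lemma exists_pos_le_LF_one (hA : AssumptionA1 μ q g) (m : ℕ) :
    ∃ c, 0 < c ∧ ∀ x, c ≤ LF μ q g ys n m (fun _ => 1) x := by
  induction m with
  | zero => exact ⟨1, one_pos, fun _ => le_rfl⟩
  | succ m ih =>
    obtain ⟨c, hc, hcle⟩ := ih
    obtain ⟨σ, hσ, hσle⟩ := hA.q_lower
    obtain ⟨G, hG⟩ := hA.abs_g_le (ys (n - m))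
    refine ⟨(∫ w, g w (ys (n - m)) ∂μ) * (σ * c),
      mul_pos (hA.integral_g_pos _) (mul_pos hσ hc), fun x => ?_⟩
    have hg_int : Integrable (fun w => g w (ys (n - m))) μ :=
      Integrable.of_bound (hA.measurable_g _).aestronglyMeasurable G (ae_of_all _ hG)
    rw [← integral_mul_const, LF_succ]
    refine integral_mono (hg_int.mul_const _)
      (integrable_LF_integrand hA measurable_const ⟨1, by simp⟩ m x) fun w => ?_
    rw [mul_assoc]
    exact mul_le_mul_of_nonneg_left
      (mul_le_mul (hσle _ _) (hcle _) hc.le (hA.q_nonneg _ _)) (hA.g_nonneg _ _)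

lemma exists_pos_le_Lmass (hA : AssumptionA1 μ q g) (j : ℕ) :
    ∃ c, 0 < c ∧ ∀ z, c ≤ Lmass μ q g ys n j z := by
  obtain ⟨c, hc, hcle⟩ := exists_pos_le_LF_one (ys := ys) (n := n) hA (n - j)
  exact ⟨c, hc, fun z => hcle _⟩

lemma Lmass_pos (hA : AssumptionA1 μ q g) (j : ℕ) (z : X) : 0 < Lmass μ q g ys n j z := by
  obtain ⟨c, hc, hcle⟩ := exists_pos_le_Lmass (ys := ys) (n := n) hA j
  exact hc.trans_le (hcle z)

lemma measurable_Lmass (hA : AssumptionA1 μ q g) (j : ℕ) :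
    Measurable (Lmass μ q g ys n j) :=
  measurable_LF_const hA.measurable_q hA.measurable_g measurable_const (n - j)

end Smoothing

def fwdDensity (μ : Measure X) (q : X → X → ℝ) (g : X → Y → ℝ) (ys : ℕ → Y) (n j : ℕ)
    (z w : X) : ℝ :=
  g w (ys (j + 1)) * Lmass μ q g ys n (j + 1) w * q z w / Lmass μ q g ys n j z

/-- The paper's `h_j = L_j ⋯ L_{n-1} f / L_j ⋯ L_{n-1} 1`, with `x_{0:j}` taken constant. -/
def normalizedLF (μ : Measure X) (q : X → X → ℝ) (g : X → Y → ℝ) (ys : ℕ → Y) (n : ℕ)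
    (f : (ℕ → X) → ℝ) (j : ℕ) (z : X) : ℝ :=
  LF μ q g ys n (n - j) f (fun _ => z) / Lmass μ q g ys n j z

section ForwardKernel

variable {μ : Measure X} {q : X → X → ℝ} {g : X → Y → ℝ} {ys : ℕ → Y} {n j : ℕ}

lemma Fker_of_lt (hj : j < n) (z : X) :
    Fker μ q g ys n j z = μ.withDensity fun w => ENNReal.ofReal (fwdDensity μ q g ys n j z w) :=
  if_pos hj

lemma integral_fwdDensity_mul (z : X) (h : X → ℝ) :
    ∫ w, fwdDensity μ q g ys n j z w * h w ∂μ =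
      (∫ w, g w (ys (j + 1)) * q z w * (Lmass μ q g ys n (j + 1) w * h w) ∂μ) /
        Lmass μ q g ys n j z := by
  rw [← integral_div]
  congr 1 with w
  simp only [fwdDensity]
  ring

variable [IsFiniteMeasure μ]

lemma measurable_fwdDensity (hA : AssumptionA1 μ q g) :
    Measurable (Function.uncurry (fwdDensity μ q g ys n j)) :=
  ((((hA.measurable_g _).comp measurable_snd).mul
    ((measurable_Lmass hA _).comp measurable_snd)).mul hA.measurable_q).div
    ((measurable_Lmass hA _).comp measurable_fst)

lemma fwdDensity_nonneg (hA : AssumptionA1 μ q g) (z w : X) :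
    0 ≤ fwdDensity μ q g ys n j z w :=
  div_nonneg (mul_nonneg (mul_nonneg (hA.g_nonneg _ _) (Lmass_pos hA _ _).le)
    (hA.q_nonneg _ _)) (Lmass_pos hA _ _).le

lemma integral_Fker (hA : AssumptionA1 μ q g) (hj : j < n) (z : X) (h : X → ℝ) :
    ∫ w, h w ∂Fker μ q g ys n j z = ∫ w, fwdDensity μ q g ys n j z w * h w ∂μ := by
  rw [Fker_of_lt hj, integral_withDensity_eq_integral_toReal_smul
    (measurable_fwdDensity hA).of_uncurry_left.ennreal_ofReal
    (ae_of_all _ fun _ => ENNReal.ofReal_lt_top)]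
  simp only [ENNReal.toReal_ofReal (fwdDensity_nonneg hA z _), smul_eq_mul]

lemma measurable_Fker (hA : AssumptionA1 μ q g) (hj : j < n) :
    Measurable (Fker μ q g ys n j) := by
  refine Measure.measurable_of_measurable_coe _ fun s hs => ?_
  simp_rw [Fker_of_lt hj, withDensity_apply _ hs]
  exact (measurable_fwdDensity hA).ennreal_ofReal.lintegral_prod_right'

lemma isProbabilityMeasure_Fker (hA : AssumptionA1 μ q g) (hj : j < n) (z : X) :
    IsProbabilityMeasure (Fker μ q g ys n j z) := by
  have h1 : ∫ _, (1 : ℝ) ∂Fker μ q g ys n j z = 1 := by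
    rw [integral_Fker hA hj, integral_fwdDensity_mul]
    simp only [mul_one]
    rw [← Lmass_eq_integral hj, div_self (Lmass_pos hA j z).ne']
  rw [integral_const, smul_eq_mul, mul_one, measureReal_def, ENNReal.toReal_eq_one_iff] at h1
  exact ⟨h1⟩

variable {f : (ℕ → X) → ℝ}

lemma measurable_normalizedLF (hA : AssumptionA1 μ q g) (hf : Measurable f) (m : ℕ) :
    Measurable (normalizedLF μ q g ys n f m) :=
  (measurable_LF_const hA.measurable_q hA.measurable_g hf _).div (measurable_Lmass hA m)

lemma abs_normalizedLF_le (hA : AssumptionA1 μ q g) (hf : ∃ C, ∀ x, |f x| ≤ C) (m : ℕ) :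
    ∃ C, ∀ z, |normalizedLF μ q g ys n f m z| ≤ C := by
  obtain ⟨C, hC⟩ := abs_LF_le (μ := μ) (ys := ys) (n := n) hA.abs_q_le hA.abs_g_le hf (n - m)
  obtain ⟨c, hc, hcle⟩ := exists_pos_le_Lmass (ys := ys) (n := n) hA m
  refine ⟨C / c, fun z => ?_⟩
  rw [normalizedLF, abs_div, abs_of_pos (Lmass_pos hA m z)]
  exact div_le_div₀ ((abs_nonneg _).trans (hC fun _ => z)) (hC _) hc (hcle z)

lemma integral_normalizedLF_Fker (hA : AssumptionA1 μ q g) {i : ℕ} (hf : DependsOn f (Icc i n))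
    (hji : j < i) (hin : i ≤ n) (z : X) :
    ∫ w, normalizedLF μ q g ys n f (j + 1) w ∂Fker μ q g ys n j z =
      normalizedLF μ q g ys n f j z := by
  rw [integral_Fker hA (hji.trans_le hin), integral_fwdDensity_mul, normalizedLF,
    LF_sub_const_eq_integral hf hji hin]
  congr 1
  refine integral_congr_ae (ae_of_all _ fun w => ?_)
  simp only [normalizedLF]
  rw [mul_div_cancel₀ _ (Lmass_pos hA _ w).ne']

end ForwardKernel

/-- **Forward-kernel representation.** Assume (A1), let `0 ≤ k < i ≤ n` and
let `f` be bounded measurable and depend only on the coordinates `(x_i, …, x_n)`.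
Then `L_i⋯L_{n−1} f` depends only on the coordinate `x_i`, and
`L_k⋯L_{n−1} f(x_{0:k}) / L_k⋯L_{n−1}(x_k, X^{n+1})` equals the integral of
`h(x_i) = L_i⋯L_{n−1} f(x_i) / L_i⋯L_{n−1}(x_i, X^{n+1})` against the
composition `F_{k|n} F_{k+1|n} ⋯ F_{i−1|n}(x_k, ·)` (realized as
`δ_{x_k} F_{k|n} ⋯ F_{i−1|n}`). -/
theorem forward_kernel_representation
    (μ : Measure X) [IsProbabilityMeasure μ]
    (q : X → X → ℝ) (g : X → Y → ℝ) (ys : ℕ → Y) (n : ℕ)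
    (σm σp : ℝ)
    (hσm : 0 < σm)
    (hq_meas : Measurable (Function.uncurry q))
    (hq_low : ∀ a b, σm ≤ q a b) (hq_up : ∀ a b, q a b ≤ σp)
    (hg_meas : ∀ yv, Measurable fun x => g x yv)
    (hg_nonneg : ∀ x yv, 0 ≤ g x yv)
    (hg_bdd : ∀ yv, ∃ C, ∀ x, g x yv ≤ C)
    (hg_pos : ∀ yv, 0 < ∫ x, g x yv ∂μ)
    (k i : ℕ) (hki : k < i) (hin : i ≤ n)
    (f : (ℕ → X) → ℝ) (hf_meas : Measurable f)
    (hf_bdd : ∃ C, ∀ x, |f x| ≤ C)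
    (hf_dep : ∀ x x' : ℕ → X, (∀ j, i ≤ j → j ≤ n → x j = x' j) → f x = f x') :
    (∀ x x' : ℕ → X, x i = x' i → LF μ q g ys n (n - i) f x = LF μ q g ys n (n - i) f x') ∧
      ∀ x : ℕ → X,
        LF μ q g ys n (n - k) f x / Lmass μ q g ys n k (x k) =
          ∫ xi,
            LF μ q g ys n (n - i) f (fun _ => xi) / Lmass μ q g ys n i xi
            ∂(kcompFrom (Fker μ q g ys n) k (Measure.dirac (x k)) (i - 1 - k)) := by
  have hA : AssumptionA1 μ q g :=
    ⟨hq_meas, ⟨σm, hσm, hq_low⟩, ⟨σp, hq_up⟩, hg_meas, hg_nonneg, hg_bdd, hg_pos⟩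
  have hf : DependsOn f (Icc i n) := fun x x' h => hf_dep x x' fun j hij hjn => h j ⟨hij, hjn⟩
  refine ⟨fun x x' hx => dependsOn_LF_sub hf le_rfl hin (by rintro _ rfl; exact hx), fun x => ?_⟩
  have hlocal : LF μ q g ys n (n - k) f x = LF μ q g ys n (n - k) f (fun _ => x k) :=
    dependsOn_LF_sub hf hki.le (by omega) (by rintro _ rfl; rfl)
  have hchain := integral_kcompFrom_of_harmonic (K := Fker μ q g ys n) (k := k) (i := i)
    (fun m _ hm => measurable_Fker hA (by omega))
    (fun m _ hm => isProbabilityMeasure_Fker hA (by omega)) (Measure.dirac (x k))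
    (measurable_normalizedLF hA hf_meas) (abs_normalizedLF_le hA hf_bdd)
    (fun m _ hm => integral_normalizedLF_Fker hA hf hm hin) (i - 1 - k) (by omega)
  rw [show k + (i - 1 - k) + 1 = i by omega,
    integral_dirac' _ _ (measurable_normalizedLF hA hf_meas k).stronglyMeasurable] at hchain
  rw [hlocal]
  exact hchain.symm

end
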